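/- arXiv:0911.5036 — 2 statements merged into one kernel-verified Lean document; each statement's English description precedes it below -/
import Mathlib

section
/- Let m ≥ 2 and let S be a subset of so(m,ℂ) invariant under the adjoint action of SO(m,ℂ). Let R be a symmetric bilinear form on so(m,ℝ), extended complex-bilinearly to so(m,ℂ). Suppose R(ω, ω̄) ≥ 0 for every ω ∈ S, and v ∈ S satisfies R(v, v̄) = 0. Then for every x ∈ so(m,ℂ), R([x,[x,v]], v̄) + R(v, [x̄,[x̄,v̄]]) + 2 R([x,v], [x̄,v̄]) ≥ 0. -/
/-!
Statement 3: the second-variation inequality in the proof of Wilking's theorem.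
-/

noncomputable section

open Matrix ComplexOrder

noncomputable section

/-- The Lie algebra `so(m,ℂ)` of skew-symmetric complex `m × m` matrices,
as a complex submodule of the matrix space. -/
def soC (m : ℕ) : Submodule ℂ (Matrix (Fin m) (Fin m) ℂ) where
  carrier := {X | Xᵀ = -X}
  add_mem' := by
    intro a b ha hb
    simp only [Set.mem_setOf_eq] at *
    rw [transpose_add, ha, hb, neg_add]
  zero_mem' := by simp
  smul_mem' := by
    intro c x hx
    simp only [Set.mem_setOf_eq] at *
    rw [transpose_smul, hx, smul_neg]

namespace soC

variable {m : ℕ}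

lemma mem_iff {X : Matrix (Fin m) (Fin m) ℂ} : X ∈ soC m ↔ Xᵀ = -X := Iff.rfl

/-- Entrywise complex conjugation `ω ↦ ω̄` on `so(m,ℂ)`. -/
def conj (X : soC m) : soC m :=
  ⟨(X : Matrix (Fin m) (Fin m) ℂ).map (starRingEnd ℂ), by
    have hX : (X : Matrix (Fin m) (Fin m) ℂ)ᵀ = -(X : Matrix (Fin m) (Fin m) ℂ) := X.2
    rw [mem_iff]
    ext i j
    have h := congrFun (congrFun hX i) j
    simp only [transpose_apply, Matrix.neg_apply] at h
    simp only [transpose_apply, map_apply, Matrix.neg_apply, h, map_neg]⟩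

/-- The adjoint map `ad_v = [v, ·]` as a `ℂ`-linear endomorphism of `so(m,ℂ)`. -/
def ad (v : soC m) : soC m →ₗ[ℂ] soC m where
  toFun X := ⟨(v : Matrix (Fin m) (Fin m) ℂ) * X - (X : Matrix (Fin m) (Fin m) ℂ) * v, by
    rw [mem_iff]
    have hv : (v : Matrix (Fin m) (Fin m) ℂ)ᵀ = -(v : Matrix (Fin m) (Fin m) ℂ) := v.2
    have hX : (X : Matrix (Fin m) (Fin m) ℂ)ᵀ = -(X : Matrix (Fin m) (Fin m) ℂ) := X.2
    rw [transpose_sub, transpose_mul, transpose_mul, hv, hX]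
    noncomm_ring⟩
  map_add' X Y := by
    apply Subtype.ext
    simp only [Submodule.coe_add]
    noncomm_ring
  map_smul' c X := by
    apply Subtype.ext
    simp only [Submodule.coe_smul, RingHom.id_apply]
    rw [Matrix.mul_smul, Matrix.smul_mul, smul_sub]

/-- The complex-bilinear extension of the trace inner product `⟨X,Y⟩ = -tr(XY)` on `so(m,ℝ)`. -/
def ip (X Y : soC m) : ℂ :=
  -Matrix.trace ((X : Matrix (Fin m) (Fin m) ℂ) * (Y : Matrix (Fin m) (Fin m) ℂ))

/-- The adjoint action `v ↦ A v A⁻¹` of `A ∈ SO(m,ℂ)` on `so(m,ℂ)`. -/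
def soAct (A : Matrix (Fin m) (Fin m) ℂ) (hA : Aᵀ * A = 1) (v : soC m) : soC m :=
  ⟨A * (v : Matrix (Fin m) (Fin m) ℂ) * A⁻¹, by
    have hAinv : A⁻¹ = Aᵀ := inv_eq_left_inv hA
    have hv : (v : Matrix (Fin m) (Fin m) ℂ)ᵀ = -(v : Matrix (Fin m) (Fin m) ℂ) := v.2
    rw [mem_iff, hAinv, transpose_mul, transpose_mul, transpose_transpose, hv]
    noncomm_ring⟩

end soC

section Aux

open NormedSpace Filter Set

/-- Second derivative test at a global minimum. -/
lemma secondDerivTest (f f' f'' : ℝ → ℝ)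
    (hd : ∀ t, HasDerivAt f (f' t) t) (hd2 : ∀ t, HasDerivAt f' (f'' t) t)
    (hmin : ∀ t, f 0 ≤ f t) : 0 ≤ f'' 0 := by
  have hlm : IsLocalMin f 0 := Filter.Eventually.of_forall hmin
  have h0 : f' 0 = 0 := hlm.hasDerivAt_eq_zero (hd 0)
  by_contra hneg
  push_neg at hneg
  have hs := (hd2 0)
  rw [hasDerivAt_iff_tendsto_slope] at hs
  have h2 : ∀ᶠ t in nhdsWithin (0:ℝ) {(0:ℝ)}ᶜ, slope f' 0 t < 0 := hs (Iio_mem_nhds hneg)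
  rw [eventually_nhdsWithin_iff] at h2
  rw [Metric.eventually_nhds_iff] at h2
  obtain ⟨ε, hε, hε2⟩ := h2
  have hneg' : ∀ t ∈ Set.Ioo (0:ℝ) ε, f' t < 0 := by
    intro t ht
    have hts : slope f' 0 t < 0 := by
      apply hε2 (by simp [Real.dist_eq, abs_of_pos ht.1]; exact ht.2)
      simp [ne_of_gt ht.1]
    rw [slope_def_field] at hts
    have := div_neg_iff.mp (by simpa [h0] using hts)
    rcases this with ⟨h1, h2⟩ | ⟨h1, h2⟩
    · linarith [ht.1]
    · linarith
  have hanti : StrictAntiOn f (Set.Icc 0 (ε/2)) := by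
    apply strictAntiOn_of_deriv_neg (convex_Icc _ _)
      (fun t _ => (hd t).continuousAt.continuousWithinAt)
    intro t ht
    rw [interior_Icc] at ht
    rw [(hd t).deriv]
    exact hneg' t ⟨ht.1, by linarith [ht.2]⟩
  have := hanti (Set.left_mem_Icc.2 (by linarith)) (Set.right_mem_Icc.2 (by linarith)) (by linarith)
  linarith [hmin (ε/2)]

attribute [local instance] Matrix.linftyOpNormedRing Matrix.linftyOpNormedAlgebra
attribute [-instance] instTopologicalSpaceMatrix
attribute [-instance] Matrix.instUniformSpace
attribute [-instance] Matrix.addCommGroup Matrix.addCommMonoid Matrix.module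

variable {m : ℕ}

local notation "Mat" => Matrix (Fin m) (Fin m) ℂ

/-- The curve `t ↦ exp(t x) w exp(-t x)`. -/
noncomputable def curveA (x w : Mat) (t : ℝ) : Mat :=
  exp (t • x) * w * exp (t • (-x))

lemma curveA_zero (x w : Mat) : curveA x w 0 = w := by
  simp [curveA, exp_zero]

lemma curveA_hasDerivAt (x w : Mat) (t : ℝ) :
    HasDerivAt (curveA x w) (curveA x (x * w - w * x) t) t := by
  have he : HasDerivAt (fun t : ℝ => exp (t • x)) (exp (t • x) * x) t :=
    hasDerivAt_exp_smul_const x t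
  have hh : HasDerivAt (fun t : ℝ => exp (t • (-x))) (exp (t • (-x)) * (-x)) t :=
    hasDerivAt_exp_smul_const (-x) t
  have := (he.mul_const w).mul hh
  convert this using 1
  · rfl
  have hcomm : x * exp (t • (-x)) = exp (t • (-x)) * x := by
    have : Commute (t • (-x)) x := ((Commute.refl x).neg_left.smul_left t)
    exact (this.exp_left).symm
  simp only [curveA, mul_sub, sub_mul, mul_neg, mul_assoc]
  rw [← hcomm]
  noncomm_ring

lemma exp_skew_orth (x : Mat) (hx : xᵀ = -x) (t : ℝ) :
    (exp (t • x))ᵀ * exp (t • x) = 1 := by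
  have h1 : (exp (t • x))ᵀ = exp (-(t • x)) := by
    erw [← Matrix.exp_transpose, transpose_smul, hx, smul_neg]
    rfl
  erw [h1, ← Matrix.exp_add_of_commute (-(t • x)) (t • x) (Commute.neg_left (Commute.refl _)),
    neg_add_cancel, exp_zero]

lemma exp_skew_det (x : Mat) (hx : xᵀ = -x) (t : ℝ) :
    (exp (t • x)).det = 1 := by
  have hsq : ∀ s : ℝ, ((exp (s • x)).det) ^ 2 = 1 := by
    intro s
    have := congrArg Matrix.det (exp_skew_orth x hx s)
    rwa [det_mul, det_transpose, ← sq, det_one] at this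
  have hhalf : exp (t • x) = exp ((t/2) • x) * exp ((t/2) • x) := by
    erw [← Matrix.exp_add_of_commute _ _ (Commute.refl _), ← add_smul, add_halves]
    rfl
  rw [hhalf, det_mul, ← sq, hsq]

lemma exp_skew_inv (x : Mat) (t : ℝ) :
    exp (t • (-x)) = (exp (t • x))⁻¹ := by
  erw [smul_neg, Matrix.exp_neg]
  rfl

lemma curveA_map_conj (x w : Mat) (t : ℝ) :
    (curveA x w t).map (starRingEnd ℂ)
      = curveA (x.map (starRingEnd ℂ)) (w.map (starRingEnd ℂ)) t := by
  have hcont : Continuous fun X : Mat => X.map (starRingEnd ℂ) :=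
    continuous_id.matrix_map Complex.continuous_conj
  have hsmul : ∀ y : Mat, ((t • y).map (starRingEnd ℂ)) = t • (y.map (starRingEnd ℂ)) := by
    intro y
    ext i j
    simp [Matrix.map_apply, Complex.real_smul]
  have hexp : ∀ y : Mat, (exp y).map (starRingEnd ℂ)
      = exp (y.map (starRingEnd ℂ)) := fun y =>
    map_exp ((starRingEnd ℂ).mapMatrix) hcont y
  rw [curveA, Matrix.map_mul, Matrix.map_mul, hexp, hexp, hsmul, hsmul, curveA]
  have : (-x).map (starRingEnd ℂ) = -(x.map (starRingEnd ℂ)) := by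
    ext i j; simp [Matrix.map_apply]
  rw [this]

namespace soC

lemma coe_conj (X : soC m) : (conj X : Mat) = (X : Mat).map (starRingEnd ℂ) := rfl

lemma conj_conj (X : soC m) : conj (conj X) = X := by
  apply Subtype.ext
  ext i j
  simp [conj, Matrix.map_apply]

lemma coe_ad (x X : soC m) : (ad x X : Mat) = (x : Mat) * X - (X : Mat) * x := rfl

lemma conj_ad (x X : soC m) : conj (ad x X) = ad (conj x) (conj X) := by
  apply Subtype.ext
  show ((x : Mat) * X - (X : Mat) * x).map (starRingEnd ℂ) = _
  rw [Matrix.map_sub _ (map_sub (starRingEnd ℂ)), Matrix.map_mul, Matrix.map_mul]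
  rfl

/-- The projection of a matrix onto its skew-symmetric part, as a `ℂ`-linear map. -/
noncomputable def proj : Mat →ₗ[ℂ] soC m where
  toFun X := ⟨(2⁻¹ : ℂ) • (X - Xᵀ), by
    rw [mem_iff, transpose_smul, transpose_sub, transpose_transpose, ← smul_neg, neg_sub]⟩
  map_add' a b := by
    apply Subtype.ext
    simp only [Submodule.coe_add]
    rw [transpose_add]
    rw [show a + b - (aᵀ + bᵀ) = (a - aᵀ) + (b - bᵀ) by abel, smul_add]
  map_smul' c a := by
    apply Subtype.ext
    simp only [Submodule.coe_smul, RingHom.id_apply]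
    rw [transpose_smul, ← smul_sub, smul_comm]

lemma proj_coe (X : soC m) : proj (X : Mat) = X := by
  apply Subtype.ext
  show (2⁻¹ : ℂ) • ((X : Mat) - (X : Mat)ᵀ) = (X : Mat)
  rw [X.2, sub_neg_eq_add, ← two_smul ℂ, smul_smul]
  norm_num

end soC

local instance : FiniteDimensional ℝ Mat := Module.Finite.trans ℂ Mat

/-- The continuous real-bilinear extension of `R` to the full matrix space. -/
noncomputable def bilinC (R : soC m →ₗ[ℂ] soC m →ₗ[ℂ] ℂ) : Mat →L[ℝ] Mat →L[ℝ] ℂ :=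
  LinearMap.toContinuousLinearMap
  { toFun := fun X => LinearMap.toContinuousLinearMap
      (((R.compl₁₂ soC.proj soC.proj).restrictScalars₁₂ ℝ ℝ) X)
    map_add' := by intro a b; ext y; simp
    map_smul' := by intro c a; ext y; simp }

lemma bilinC_apply (R : soC m →ₗ[ℂ] soC m →ₗ[ℂ] ℂ) (X Y : Mat) :
    bilinC R X Y = R (soC.proj X) (soC.proj Y) := rfl

theorem wilking_aux
    (S : Set (soC m))
    (hS : ∀ v ∈ S, ∀ (A : Matrix (Fin m) (Fin m) ℂ) (hA : Aᵀ * A = 1), A.det = 1 →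
      soC.soAct A hA v ∈ S)
    (R : soC m →ₗ[ℂ] soC m →ₗ[ℂ] ℂ)
    (hRsymm : ∀ X Y, R X Y = R Y X)
    (hRreal : ∀ X Y, R (soC.conj X) (soC.conj Y) = starRingEnd ℂ (R X Y))
    (hRpos : ∀ ω ∈ S, 0 ≤ R ω (soC.conj ω))
    (v : soC m) (hv : v ∈ S)
    (hRv : R v (soC.conj v) = 0) :
    ∀ x : soC m,
      0 ≤ R (soC.ad x (soC.ad x v)) (soC.conj v)
          + R v (soC.ad (soC.conj x) (soC.ad (soC.conj x) (soC.conj v)))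
          + 2 * R (soC.ad x v) (soC.ad (soC.conj x) (soC.conj v)) := by
  intro x
  set Φ := bilinC R with hΦdef
  set X : Mat := (x : Mat) with hXdef
  set V : Mat := (v : Mat) with hVdef
  set Xc : Mat := X.map (starRingEnd ℂ) with hXcdef
  set Vc : Mat := V.map (starRingEnd ℂ) with hVcdef
  -- generic derivative of the bilinear curve
  have dl : ∀ (w w' : Mat) (t : ℝ),
      HasDerivAt (fun s => Φ (curveA X w s) (curveA Xc w' s))
        (Φ (curveA X (X * w - w * X) t) (curveA Xc w' t)
          + Φ (curveA X w t) (curveA Xc (Xc * w' - w' * Xc) t)) t := by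
    intro w w' t
    have h1 := curveA_hasDerivAt X w t
    have h2 := curveA_hasDerivAt Xc w' t
    have hΦF : HasFDerivAt (⇑Φ) Φ (curveA X w t) := ContinuousLinearMap.hasFDerivAt _
    have hc : HasDerivAt (fun s => Φ (curveA X w s)) (Φ (curveA X (X * w - w * X) t)) t :=
      hΦF.comp_hasDerivAt t h1
    exact hc.clm_apply h2
  have hre : ∀ (u : ℝ → ℂ) (d : ℂ) (t : ℝ), HasDerivAt u d t →
      HasDerivAt (fun s => (u s).re) d.re t := fun u d t h =>
    (Complex.reCLM.hasFDerivAt).comp_hasDerivAt t h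
  -- pointwise membership and values
  have hpt : ∀ t : ℝ, ∃ ω ∈ S, curveA X V t = (ω : Mat)
      ∧ curveA Xc Vc t = ((soC.conj ω : soC m) : Mat) := by
    intro t
    have hOrth := exp_skew_orth X x.2 t
    have hdet := exp_skew_det X x.2 t
    have h1 : curveA X V t = ((soC.soAct (exp (t • X)) hOrth v : soC m) : Mat) := by
      show curveA X V t = exp (t • X) * V * (exp (t • X))⁻¹
      rw [curveA, exp_skew_inv]
    refine ⟨soC.soAct _ hOrth v, hS v hv _ hOrth hdet, h1, ?_⟩
    rw [show curveA Xc Vc t = (curveA X V t).map (starRingEnd ℂ) from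
      (curveA_map_conj X V t).symm, h1]
    rfl
  have hfpos : ∀ t : ℝ, 0 ≤ (Φ (curveA X V t) (curveA Xc Vc t)).re := by
    intro t
    obtain ⟨ω, hω, h1, h2⟩ := hpt t
    have hval : Φ (curveA X V t) (curveA Xc Vc t) = R ω (soC.conj ω) := by
      rw [h1, h2, hΦdef, bilinC_apply, soC.proj_coe, soC.proj_coe]
    rw [hval]
    have := (Complex.le_def.mp (hRpos ω hω)).1
    simpa using this
  have hf0 : Φ (curveA X V 0) (curveA Xc Vc 0) = 0 := by
    rw [curveA_zero, curveA_zero, hΦdef]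
    show bilinC R ((v : Mat)) (((soC.conj v : soC m) : Mat)) = 0
    rw [bilinC_apply, soC.proj_coe, soC.proj_coe, hRv]
  -- second derivative test
  have key := secondDerivTest
    (fun t => (Φ (curveA X V t) (curveA Xc Vc t)).re)
    (fun t => (Φ (curveA X (X * V - V * X) t) (curveA Xc Vc t)
      + Φ (curveA X V t) (curveA Xc (Xc * Vc - Vc * Xc) t)).re)
    (fun t => ((Φ (curveA X (X * (X * V - V * X) - (X * V - V * X) * X) t) (curveA Xc Vc t)
        + Φ (curveA X (X * V - V * X) t) (curveA Xc (Xc * Vc - Vc * Xc) t))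
      + (Φ (curveA X (X * V - V * X) t) (curveA Xc (Xc * Vc - Vc * Xc) t)
        + Φ (curveA X V t) (curveA Xc (Xc * (Xc * Vc - Vc * Xc) - (Xc * Vc - Vc * Xc) * Xc) t))).re)
    (fun t => hre _ _ t (dl V Vc t))
    (fun t => hre _ _ t ((dl (X * V - V * X) Vc t).add (dl V (Xc * Vc - Vc * Xc) t)))
    (by
      intro t
      simp only [hf0, Complex.zero_re]
      exact hfpos t)
  -- identify the value at 0
  set A := soC.ad x (soC.ad x v) with hA
  set C := soC.ad x v with hC
  set B := soC.ad (soC.conj x) (soC.ad (soC.conj x) (soC.conj v)) with hB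
  set D := soC.ad (soC.conj x) (soC.conj v) with hD
  set E : ℂ := R A (soC.conj v) + R v B + 2 * R C D with hE
  have hF2 : ((Φ (curveA X (X * (X * V - V * X) - (X * V - V * X) * X) 0) (curveA Xc Vc 0)
        + Φ (curveA X (X * V - V * X) 0) (curveA Xc (Xc * Vc - Vc * Xc) 0))
      + (Φ (curveA X (X * V - V * X) 0) (curveA Xc (Xc * Vc - Vc * Xc) 0)
        + Φ (curveA X V 0) (curveA Xc (Xc * (Xc * Vc - Vc * Xc) - (Xc * Vc - Vc * Xc) * Xc) 0)))
      = E := by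
    simp only [curveA_zero, hΦdef]
    have e1 : X * (X * V - V * X) - (X * V - V * X) * X = ((A : soC m) : Mat) := rfl
    have e2 : X * V - V * X = ((C : soC m) : Mat) := rfl
    have e3 : Xc * Vc - Vc * Xc = ((D : soC m) : Mat) := rfl
    have e4 : Xc * (Xc * Vc - Vc * Xc) - (Xc * Vc - Vc * Xc) * Xc = ((B : soC m) : Mat) := rfl
    have e5 : Vc = ((soC.conj v : soC m) : Mat) := rfl
    have e6 : V = ((v : soC m) : Mat) := rfl
    rw [e1, e4, e2, e3, e5, e6]
    have hb : ∀ (a b : soC m), bilinC R (a : Mat) (b : Mat) = R a b := by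
      intro a b
      show R (soC.proj (a : Mat)) (soC.proj (b : Mat)) = R a b
      rw [soC.proj_coe, soC.proj_coe]
    simp only [hb, hE]
    ring
  have key2 : 0 ≤ E.re := by rw [← hF2]; exact key
  -- realness of E
  have hconjA : soC.conj A = B := by
    rw [hA, soC.conj_ad, soC.conj_ad, hB]
  have hconjC : soC.conj C = D := by
    rw [hC, soC.conj_ad, hD]
  have hconjB : soC.conj B = A := by rw [← hconjA, soC.conj_conj]
  have hconjD : soC.conj D = C := by rw [← hconjC, soC.conj_conj]
  have hreal : starRingEnd ℂ E = E := by
    rw [hE, map_add, map_add, _root_.map_mul]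
    rw [← hRreal A (soC.conj v), ← hRreal v B, ← hRreal C D]
    rw [soC.conj_conj, hconjA, hconjB, hconjC, hconjD]
    rw [hRsymm B v, hRsymm (soC.conj v) A, hRsymm D C]
    rw [show (starRingEnd ℂ) 2 = 2 from map_ofNat _ 2]
    ring
  rw [Complex.le_def]
  constructor
  · simpa using key2
  · have := (Complex.conj_eq_iff_im).mp hreal
    simpa [hE] using this.symm

end Aux
/-- **Second-variation inequality** in the proof of Wilking's theorem: if the complex-bilinear
extension `R` of a symmetric bilinear form on `so(m,ℝ)` satisfies `R(ω,ω̄) ≥ 0` on an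
`SO(m,ℂ)`-Ad-invariant subset `S ⊆ so(m,ℂ)`, and `v ∈ S` satisfies `R(v,v̄) = 0`, then for
every `x ∈ so(m,ℂ)`,
`R([x,[x,v]], v̄) + R(v, [x̄,[x̄,v̄]]) + 2 R([x,v],[x̄,v̄]) ≥ 0`. -/
theorem wilking_second_variation
    (m : ℕ) (hm : 2 ≤ m) (S : Set (soC m))
    (hS : ∀ v ∈ S, ∀ (A : Matrix (Fin m) (Fin m) ℂ) (hA : Aᵀ * A = 1), A.det = 1 →
      soC.soAct A hA v ∈ S)
    (R : soC m →ₗ[ℂ] soC m →ₗ[ℂ] ℂ)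
    (hRsymm : ∀ X Y, R X Y = R Y X)
    (hRreal : ∀ X Y, R (soC.conj X) (soC.conj Y) = starRingEnd ℂ (R X Y))
    (hRpos : ∀ ω ∈ S, 0 ≤ R ω (soC.conj ω))
    (v : soC m) (hv : v ∈ S)
    (hRv : R v (soC.conj v) = 0) :
    ∀ x : soC m,
      0 ≤ R (soC.ad x (soC.ad x v)) (soC.conj v)
          + R v (soC.ad (soC.conj x) (soC.ad (soC.conj x) (soC.conj v)))
          + 2 * R (soC.ad x v) (soC.ad (soC.conj x) (soC.conj v)) := by
  exact wilking_aux S hS R hRsymm hRreal hRpos v hv hRv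

end
end
end

section
/- Let m ≥ 2, k ≥ 1, and let Θ be an algebraic curvature tensor on ℝ^m, viewed as a symmetric bilinear form on Λ²ℝ^m and extended complex-bilinearly to Λ²ℂ^m. Suppose Θ(ω, ω̄) ≥ 0 for every ω ∈ Λ²ℂ^m of rank at most k (i.e. Θ lies in the cone C_k), and suppose ω₀ ∈ Λ²ℂ^m has rank at most k and satisfies Θ(ω₀, ω̄₀) = 0. Then for every symmetric positive semidefinite bilinear form g on (ℝ^m)*, F(Θ,g)(ω₀, ω̄₀) = 0, where in any basis F(Θ,g)_{abcd} := −g^{αβ}[Θ_{αbcd}Θ_{aβ} + Θ_{aαcd}Θ_{bβ} + Θ_{abαd}Θ_{cβ} + Θ_{abcα}Θ_{dβ}] with Θ_{ab} := g^{cd}Θ_{acbd}. -/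
/-!
Statement 9 (Corollary 3.3 of the paper, specialized to the Wilking cones `C_k`):
if the algebraic curvature tensor `Θ` on `ℝ^m` lies in the cone `C_k` (its complex-bilinear
extension is nonnegative on 2-vectors of rank at most `k`), and `ω₀` has rank at most `k`
with `Θ(ω₀,ω̄₀) = 0`, then `F(Θ,g)(ω₀,ω̄₀) = 0` for every symmetric positive semidefinite
bilinear form `g` on `(ℝ^m)*`.
2-vectors in `Λ²ℂ^m` are identified with skew-symmetric complex matrices via
`u ∧ v ↦ (u_i v_j - u_j v_i)_{ij}`.
-/

noncomputable section

open Matrix ComplexOrder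

/-- `Θ` (given by its components in the standard basis of `ℝ^m`) is an algebraic curvature
tensor: antisymmetry in the first and last pairs, symmetry under exchange of the two pairs,
and the first Bianchi identity. -/
def IsCurv {m : ℕ} (Θ : Fin m → Fin m → Fin m → Fin m → ℝ) : Prop :=
  (∀ a b c e, Θ b a c e = -Θ a b c e) ∧
  (∀ a b c e, Θ a b e c = -Θ a b c e) ∧
  (∀ a b c e, Θ c e a b = Θ a b c e) ∧
  (∀ a b c e, Θ a b c e + Θ b c a e + Θ c a b e = 0)

/-- The simple 2-vector `u ∧ v ∈ Λ²ℂ^m`, identified with the skew-symmetric matrix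
`(u ∧ v)_{ij} = u_i v_j - u_j v_i`. -/
def wedgeC {m : ℕ} (u v : Fin m → ℂ) : Matrix (Fin m) (Fin m) ℂ :=
  Matrix.of fun i j => u i * v j - u j * v i

/-- `ω ∈ Λ²ℂ^m` has rank at most `k`: it is a (complex linear combination of, equivalently a)
sum of at most `k` simple 2-vectors. -/
def rankLE {m : ℕ} (ω : Matrix (Fin m) (Fin m) ℂ) (k : ℕ) : Prop :=
  ∃ u v : Fin k → (Fin m → ℂ), ω = ∑ a, wedgeC (u a) (v a)

/-- Entrywise complex conjugation `ω ↦ ω̄` of 2-vectors. -/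
def matConj {m : ℕ} (ω : Matrix (Fin m) (Fin m) ℂ) : Matrix (Fin m) (Fin m) ℂ :=
  ω.map (starRingEnd ℂ)

/-- The complex-bilinear extension to `Λ²ℂ^m` of a curvature tensor `Θ`, viewed as a symmetric
bilinear form on `Λ²ℝ^m`; normalized so that `cpairC Θ (u∧v) (x∧y) = Θ(u,v,x,y)`. -/
def cpairC {m : ℕ} (Θ : Fin m → Fin m → Fin m → Fin m → ℝ)
    (ω η : Matrix (Fin m) (Fin m) ℂ) : ℂ :=
  (1/4 : ℂ) * ∑ i, ∑ j, ∑ k, ∑ l, (Θ i j k l : ℂ) * ω i j * η k l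

/-- The Ricci-type contraction `Θ_{ab} = g^{ce} Θ_{acbe}`. -/
def ctr {m : ℕ} (Θ : Fin m → Fin m → Fin m → Fin m → ℝ) (g : Matrix (Fin m) (Fin m) ℝ)
    (a b : Fin m) : ℝ :=
  ∑ c, ∑ e, g c e * Θ a c b e

/-- The quadratic `F(Θ,g)` of (3.4) of the paper:
`F_{abcd} = -g^{αβ}[Θ_{αbcd}Θ_{aβ} + Θ_{aαcd}Θ_{bβ} + Θ_{abαd}Θ_{cβ} + Θ_{abcα}Θ_{dβ}]`,
where `Θ_{ab} = g^{cd}Θ_{acbd}`. -/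
def Ffun {m : ℕ} (Θ : Fin m → Fin m → Fin m → Fin m → ℝ) (g : Matrix (Fin m) (Fin m) ℝ) :
    Fin m → Fin m → Fin m → Fin m → ℝ :=
  fun a b c e => -∑ α, ∑ β, g α β *
    (Θ α b c e * ctr Θ g a β + Θ a α c e * ctr Θ g b β
      + Θ a b α e * ctr Θ g c β + Θ a b c α * ctr Θ g e β)

/-! ### Auxiliary lemmas -/

lemma wedge_map {m : ℕ} (M : Matrix (Fin m) (Fin m) ℂ) (u v : Fin m → ℂ) :
    M * wedgeC u v * Mᵀ = wedgeC (M.mulVec u) (M.mulVec v) := by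
  ext i j
  simp only [wedgeC, Matrix.mul_apply, Matrix.of_apply, Matrix.transpose_apply,
    Matrix.mulVec, dotProduct, Finset.sum_mul, Finset.mul_sum, mul_sub, sub_mul,
    Finset.sum_sub_distrib]
  congr 1
  · exact Finset.sum_congr rfl fun a _ => Finset.sum_congr rfl fun b _ => by ring
  · rw [Finset.sum_comm]
    exact Finset.sum_congr rfl fun a _ => Finset.sum_congr rfl fun b _ => by ring

lemma rankLE_conj {m k : ℕ} (M : Matrix (Fin m) (Fin m) ℂ) {ω : Matrix (Fin m) (Fin m) ℂ}
    (h : rankLE ω k) : rankLE (M * ω * Mᵀ) k := by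
  obtain ⟨u, v, rfl⟩ := h
  exact ⟨fun a => M.mulVec (u a), fun a => M.mulVec (v a), by
    rw [Finset.mul_sum, Finset.sum_mul]
    exact Finset.sum_congr rfl fun a _ => wedge_map M (u a) (v a)⟩

section sums

variable {m : ℕ}

lemma sum6_eq (f : Fin m → Fin m → Fin m → Fin m → Fin m → Fin m → ℂ) :
    ∑ p : Fin m × Fin m × Fin m × Fin m × Fin m × Fin m,
      f p.1 p.2.1 p.2.2.1 p.2.2.2.1 p.2.2.2.2.1 p.2.2.2.2.2
    = ∑ i, ∑ j, ∑ k, ∑ l, ∑ a, ∑ b, f i j k l a b := by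
  rw [Fintype.sum_prod_type]
  refine Finset.sum_congr rfl fun i _ => ?_
  rw [Fintype.sum_prod_type]
  refine Finset.sum_congr rfl fun j _ => ?_
  rw [Fintype.sum_prod_type]
  refine Finset.sum_congr rfl fun k _ => ?_
  rw [Fintype.sum_prod_type]
  refine Finset.sum_congr rfl fun l _ => ?_
  rw [Fintype.sum_prod_type]

lemma sum6_congr (f h : Fin m → Fin m → Fin m → Fin m → Fin m → Fin m → ℂ)
    (H : ∀ i j k l a b, f i j k l a b = h i j k l a b) :
    ∑ i, ∑ j, ∑ k, ∑ l, ∑ a, ∑ b, f i j k l a b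
      = ∑ i, ∑ j, ∑ k, ∑ l, ∑ a, ∑ b, h i j k l a b :=
  Finset.sum_congr rfl fun i _ => Finset.sum_congr rfl fun j _ =>
    Finset.sum_congr rfl fun k _ => Finset.sum_congr rfl fun l _ =>
      Finset.sum_congr rfl fun a _ => Finset.sum_congr rfl fun b _ => H i j k l a b

lemma sum4_congr (f h : Fin m → Fin m → Fin m → Fin m → ℂ)
    (H : ∀ i j k l, f i j k l = h i j k l) :
    ∑ i, ∑ j, ∑ k, ∑ l, f i j k l = ∑ i, ∑ j, ∑ k, ∑ l, h i j k l :=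
  Finset.sum_congr rfl fun i _ => Finset.sum_congr rfl fun j _ =>
    Finset.sum_congr rfl fun k _ => Finset.sum_congr rfl fun l _ => H i j k l

lemma swap15 (f : Fin m → Fin m → Fin m → Fin m → Fin m → Fin m → ℂ) :
    ∑ i, ∑ j, ∑ k, ∑ l, ∑ a, ∑ b, f i j k l a b
    = ∑ i, ∑ j, ∑ k, ∑ l, ∑ a, ∑ b, f a j k l i b := by
  rw [← sum6_eq, ← sum6_eq]
  exact Fintype.sum_bijective
    (fun p => (p.2.2.2.2.1, p.2.1, p.2.2.1, p.2.2.2.1, p.1, p.2.2.2.2.2))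
    (Function.Involutive.bijective fun p => rfl) _ _ (fun p => rfl)

lemma swap25 (f : Fin m → Fin m → Fin m → Fin m → Fin m → Fin m → ℂ) :
    ∑ i, ∑ j, ∑ k, ∑ l, ∑ a, ∑ b, f i j k l a b
    = ∑ i, ∑ j, ∑ k, ∑ l, ∑ a, ∑ b, f i a k l j b := by
  rw [← sum6_eq, ← sum6_eq]
  exact Fintype.sum_bijective
    (fun p => (p.1, p.2.2.2.2.1, p.2.2.1, p.2.2.2.1, p.2.1, p.2.2.2.2.2))
    (Function.Involutive.bijective fun p => rfl) _ _ (fun p => rfl)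

lemma swap35 (f : Fin m → Fin m → Fin m → Fin m → Fin m → Fin m → ℂ) :
    ∑ i, ∑ j, ∑ k, ∑ l, ∑ a, ∑ b, f i j k l a b
    = ∑ i, ∑ j, ∑ k, ∑ l, ∑ a, ∑ b, f i j a l k b := by
  rw [← sum6_eq, ← sum6_eq]
  exact Fintype.sum_bijective
    (fun p => (p.1, p.2.1, p.2.2.2.2.1, p.2.2.2.1, p.2.2.1, p.2.2.2.2.2))
    (Function.Involutive.bijective fun p => rfl) _ _ (fun p => rfl)

lemma swap45 (f : Fin m → Fin m → Fin m → Fin m → Fin m → Fin m → ℂ) :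
    ∑ i, ∑ j, ∑ k, ∑ l, ∑ a, ∑ b, f i j k l a b
    = ∑ i, ∑ j, ∑ k, ∑ l, ∑ a, ∑ b, f i j k a l b := by
  rw [← sum6_eq, ← sum6_eq]
  exact Fintype.sum_bijective
    (fun p => (p.1, p.2.1, p.2.2.1, p.2.2.2.2.1, p.2.2.2.1, p.2.2.2.2.2))
    (Function.Involutive.bijective fun p => rfl) _ _ (fun p => rfl)

end sums

section bilin

variable {m : ℕ} (Θ : Fin m → Fin m → Fin m → Fin m → ℝ)

lemma cpairC_add_left (ω ω' η : Matrix (Fin m) (Fin m) ℂ) :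
    cpairC Θ (ω + ω') η = cpairC Θ ω η + cpairC Θ ω' η := by
  simp only [cpairC, Matrix.add_apply, mul_add, add_mul, Finset.sum_add_distrib]

lemma cpairC_add_right (ω η η' : Matrix (Fin m) (Fin m) ℂ) :
    cpairC Θ ω (η + η') = cpairC Θ ω η + cpairC Θ ω η' := by
  simp only [cpairC, Matrix.add_apply, mul_add, add_mul, Finset.sum_add_distrib]

lemma cpairC_smul_left (c : ℂ) (ω η : Matrix (Fin m) (Fin m) ℂ) :
    cpairC Θ (c • ω) η = c * cpairC Θ ω η := by
  simp only [cpairC, Matrix.smul_apply, smul_eq_mul, Finset.mul_sum]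
  exact Finset.sum_congr rfl fun i _ => Finset.sum_congr rfl fun j _ =>
    Finset.sum_congr rfl fun k _ => Finset.sum_congr rfl fun l _ => by ring

lemma cpairC_smul_right (c : ℂ) (ω η : Matrix (Fin m) (Fin m) ℂ) :
    cpairC Θ ω (c • η) = c * cpairC Θ ω η := by
  simp only [cpairC, Matrix.smul_apply, smul_eq_mul, Finset.mul_sum]
  exact Finset.sum_congr rfl fun i _ => Finset.sum_congr rfl fun j _ =>
    Finset.sum_congr rfl fun k _ => Finset.sum_congr rfl fun l _ => by ring

end bilin

section conj

variable {m : ℕ}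

lemma matConj_add (A B : Matrix (Fin m) (Fin m) ℂ) :
    matConj (A + B) = matConj A + matConj B := by
  ext i j; simp [matConj]

lemma matConj_mul (A B : Matrix (Fin m) (Fin m) ℂ) :
    matConj (A * B) = matConj A * matConj B := by
  simp [matConj, Matrix.map_mul]

lemma matConj_smul_real (t : ℝ) (A : Matrix (Fin m) (Fin m) ℂ) :
    matConj ((t : ℂ) • A) = (t : ℂ) • matConj A := by
  ext i j; simp [matConj]

lemma matConj_transpose (A : Matrix (Fin m) (Fin m) ℂ) :
    matConj Aᵀ = (matConj A)ᵀ := by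
  ext i j; simp [matConj]

lemma matConj_real (B : Matrix (Fin m) (Fin m) ℝ) :
    matConj (B.map (Complex.ofReal)) = B.map (Complex.ofReal) := by
  ext i j; simp [matConj]

end conj

lemma coeff1_eq_zero {c1 c2 c3 c4 : ℝ}
    (h : ∀ t : ℝ, 0 ≤ t * c1 + t ^ 2 * c2 + t ^ 3 * c3 + t ^ 4 * c4) : c1 = 0 := by
  set f : ℝ → ℝ := fun t => t * c1 + t ^ 2 * c2 + t ^ 3 * c3 + t ^ 4 * c4 with hf
  have hd : HasDerivAt f c1 0 := by
    have h1 : HasDerivAt (fun t : ℝ => t) 1 (0:ℝ) := hasDerivAt_id 0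
    have h2 := hasDerivAt_pow 2 (0:ℝ)
    have h3 := hasDerivAt_pow 3 (0:ℝ)
    have h4 := hasDerivAt_pow 4 (0:ℝ)
    have := ((h1.mul_const c1).add (h2.mul_const c2)).add
      ((h3.mul_const c3).add (h4.mul_const c4))
    have e : f = ((fun y => y * c1) + fun y => y ^ 2 * c2)
        + ((fun y => y ^ 3 * c3) + fun y => y ^ 4 * c4) := by
      funext t
      simp only [hf, Pi.add_apply]
      ring
    rw [e]
    exact this.congr_deriv (by norm_num)
  have hmin : IsLocalMin f 0 := by
    refine Filter.Eventually.of_forall fun t => ?_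
    simpa [hf] using h t
  have := hmin.deriv_eq_zero
  rwa [hd.deriv] at this

/-! ### The main algebraic identity -/

/-- The complexified matrix `B = g ⬝ Rᵀ`, `R` the Ricci contraction. -/
def BcM {m : ℕ} (Θ : Fin m → Fin m → Fin m → Fin m → ℝ) (g : Matrix (Fin m) (Fin m) ℝ) :
    Matrix (Fin m) (Fin m) ℂ :=
  (g * (Matrix.of (ctr Θ g))ᵀ).map Complex.ofReal

section identity

variable {m : ℕ} (Θ : Fin m → Fin m → Fin m → Fin m → ℝ) (g : Matrix (Fin m) (Fin m) ℝ)
  (ω η : Matrix (Fin m) (Fin m) ℂ)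

lemma tid1 :
    (∑ i, ∑ j, ∑ k, ∑ l, ∑ a, ∑ b,
      (g a b : ℂ) * ((Θ a j k l : ℂ) * (ctr Θ g i b : ℂ)) * ω i j * η k l)
    = ∑ i, ∑ j, ∑ k, ∑ l, ∑ a, ∑ b,
      (Θ i j k l : ℂ) * ((g i b : ℂ) * (ctr Θ g a b : ℂ) * ω a j) * η k l := by
  rw [swap15]
  exact sum6_congr _ _ fun i j k l a b => by ring

lemma tid2 :
    (∑ i, ∑ j, ∑ k, ∑ l, ∑ a, ∑ b,
      (g a b : ℂ) * ((Θ i a k l : ℂ) * (ctr Θ g j b : ℂ)) * ω i j * η k l)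
    = ∑ i, ∑ j, ∑ k, ∑ l, ∑ a, ∑ b,
      (Θ i j k l : ℂ) * (ω i a * ((g j b : ℂ) * (ctr Θ g a b : ℂ))) * η k l := by
  rw [swap25]
  exact sum6_congr _ _ fun i j k l a b => by ring

lemma tid3 :
    (∑ i, ∑ j, ∑ k, ∑ l, ∑ a, ∑ b,
      (g a b : ℂ) * ((Θ i j a l : ℂ) * (ctr Θ g k b : ℂ)) * ω i j * η k l)
    = ∑ i, ∑ j, ∑ k, ∑ l, ∑ a, ∑ b,
      (Θ i j k l : ℂ) * ω i j * ((g k b : ℂ) * (ctr Θ g a b : ℂ) * η a l) := by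
  rw [swap35]
  exact sum6_congr _ _ fun i j k l a b => by ring

lemma tid4 :
    (∑ i, ∑ j, ∑ k, ∑ l, ∑ a, ∑ b,
      (g a b : ℂ) * ((Θ i j k a : ℂ) * (ctr Θ g l b : ℂ)) * ω i j * η k l)
    = ∑ i, ∑ j, ∑ k, ∑ l, ∑ a, ∑ b,
      (Θ i j k l : ℂ) * ω i j * (η k a * ((g l b : ℂ) * (ctr Θ g a b : ℂ))) := by
  rw [swap45]
  exact sum6_congr _ _ fun i j k l a b => by ring

lemma half1 :
    (∑ i, ∑ j, ∑ k, ∑ l, (Θ i j k l : ℂ) * ((BcM Θ g * ω + ω * (BcM Θ g)ᵀ) i j) * η k l)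
    = (∑ i, ∑ j, ∑ k, ∑ l, ∑ a, ∑ b,
        (Θ i j k l : ℂ) * ((g i b : ℂ) * (ctr Θ g a b : ℂ) * ω a j) * η k l)
      + ∑ i, ∑ j, ∑ k, ∑ l, ∑ a, ∑ b,
        (Θ i j k l : ℂ) * (ω i a * ((g j b : ℂ) * (ctr Θ g a b : ℂ))) * η k l := by
  simp only [← Finset.sum_add_distrib]
  refine sum4_congr _ _ fun i j k l => ?_
  simp only [BcM, Matrix.add_apply, Matrix.mul_apply, Matrix.transpose_apply,
    Matrix.map_apply, Matrix.of_apply]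
  push_cast
  simp only [mul_add, add_mul, Finset.sum_mul, Finset.mul_sum]
  simp only [← Finset.sum_add_distrib]

lemma half2 :
    (∑ i, ∑ j, ∑ k, ∑ l, (Θ i j k l : ℂ) * ω i j * ((BcM Θ g * η + η * (BcM Θ g)ᵀ) k l))
    = (∑ i, ∑ j, ∑ k, ∑ l, ∑ a, ∑ b,
        (Θ i j k l : ℂ) * ω i j * ((g k b : ℂ) * (ctr Θ g a b : ℂ) * η a l))
      + ∑ i, ∑ j, ∑ k, ∑ l, ∑ a, ∑ b,
        (Θ i j k l : ℂ) * ω i j * (η k a * ((g l b : ℂ) * (ctr Θ g a b : ℂ))) := by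
  simp only [← Finset.sum_add_distrib]
  refine sum4_congr _ _ fun i j k l => ?_
  simp only [BcM, Matrix.add_apply, Matrix.mul_apply, Matrix.transpose_apply,
    Matrix.map_apply, Matrix.of_apply]
  push_cast
  simp only [mul_add, add_mul, Finset.sum_mul, Finset.mul_sum]
  simp only [← Finset.sum_add_distrib]

lemma Fsum_eq :
    (∑ i, ∑ j, ∑ k, ∑ l, (Ffun Θ g i j k l : ℂ) * ω i j * η k l)
    = -((∑ i, ∑ j, ∑ k, ∑ l, ∑ a, ∑ b,
          (g a b : ℂ) * ((Θ a j k l : ℂ) * (ctr Θ g i b : ℂ)) * ω i j * η k l)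
        + (∑ i, ∑ j, ∑ k, ∑ l, ∑ a, ∑ b,
          (g a b : ℂ) * ((Θ i a k l : ℂ) * (ctr Θ g j b : ℂ)) * ω i j * η k l)
        + (∑ i, ∑ j, ∑ k, ∑ l, ∑ a, ∑ b,
          (g a b : ℂ) * ((Θ i j a l : ℂ) * (ctr Θ g k b : ℂ)) * ω i j * η k l)
        + ∑ i, ∑ j, ∑ k, ∑ l, ∑ a, ∑ b,
          (g a b : ℂ) * ((Θ i j k a : ℂ) * (ctr Θ g l b : ℂ)) * ω i j * η k l) := by
  have leaf : ∀ i j k l, (Ffun Θ g i j k l : ℂ) * ω i j * η k l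
      = ∑ a, ∑ b, -((g a b : ℂ) * ((Θ a j k l : ℂ) * (ctr Θ g i b : ℂ)) * ω i j * η k l
          + (g a b : ℂ) * ((Θ i a k l : ℂ) * (ctr Θ g j b : ℂ)) * ω i j * η k l
          + (g a b : ℂ) * ((Θ i j a l : ℂ) * (ctr Θ g k b : ℂ)) * ω i j * η k l
          + (g a b : ℂ) * ((Θ i j k a : ℂ) * (ctr Θ g l b : ℂ)) * ω i j * η k l) := by
    intro i j k l
    simp only [Ffun]
    push_cast
    simp only [neg_mul, Finset.sum_mul, ← Finset.sum_neg_distrib]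
    exact Finset.sum_congr rfl fun a _ => Finset.sum_congr rfl fun b _ => by ring
  rw [sum4_congr _ _ leaf]
  simp only [Finset.sum_neg_distrib, Finset.sum_add_distrib]

lemma identityA :
    cpairC (Ffun Θ g) ω η
    = -(cpairC Θ (BcM Θ g * ω + ω * (BcM Θ g)ᵀ) η
        + cpairC Θ ω (BcM Θ g * η + η * (BcM Θ g)ᵀ)) := by
  simp only [cpairC]
  rw [Fsum_eq, tid1, tid2, tid3, tid4, half1, half2]
  ring

end identity
lemma matConj_smul {m' : ℕ} (c : ℂ) (A : Matrix (Fin m') (Fin m') ℂ) :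
    matConj (c • A) = (starRingEnd ℂ c) • matConj A := by
  ext i j; simp [matConj]

lemma expandPoly {m : ℕ} (Θ : Fin m → Fin m → Fin m → Fin m → ℝ) (t : ℝ)
    (x0 x1 x2 y0 y1 y2 : Matrix (Fin m) (Fin m) ℂ) (h0 : cpairC Θ x0 y0 = 0) :
    cpairC Θ (x0 + (t:ℂ) • x1 + (t:ℂ)^2 • x2) (y0 + (t:ℂ) • y1 + (t:ℂ)^2 • y2)
    = (t:ℂ) * (cpairC Θ x1 y0 + cpairC Θ x0 y1)
      + (t:ℂ)^2 * (cpairC Θ x2 y0 + cpairC Θ x1 y1 + cpairC Θ x0 y2)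
      + (t:ℂ)^3 * (cpairC Θ x2 y1 + cpairC Θ x1 y2)
      + (t:ℂ)^4 * (cpairC Θ x2 y2) := by
  simp only [cpairC_add_left, cpairC_add_right, cpairC_smul_left, cpairC_smul_right, h0]
  ring

/-- **Corollary 3.3 of the paper for the Wilking cones `C_k`**: if `Θ ∈ C_k`,
`ω₀ ∈ Λ²ℂ^m` has rank at most `k` and `Θ(ω₀,ω̄₀) = 0`, then for every symmetric positive
semidefinite bilinear form `g` on `(ℝ^m)*`, `F(Θ,g)(ω₀,ω̄₀) = 0`. -/
theorem F_vanishes_on_null_two_vector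
    (m k : ℕ) (hm : 2 ≤ m) (hk : 1 ≤ k)
    (Θ : Fin m → Fin m → Fin m → Fin m → ℝ) (hΘ : IsCurv Θ)
    (hCk : ∀ ω : Matrix (Fin m) (Fin m) ℂ, rankLE ω k → 0 ≤ cpairC Θ ω (matConj ω))
    (ω₀ : Matrix (Fin m) (Fin m) ℂ) (hω₀ : rankLE ω₀ k)
    (hnull : cpairC Θ ω₀ (matConj ω₀) = 0)
    (g : Matrix (Fin m) (Fin m) ℝ) (hg : g.PosSemidef) :
    cpairC (Ffun Θ g) ω₀ (matConj ω₀) = 0 := by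
  -- notation
  have hBcreal : matConj (BcM Θ g) = BcM Θ g := matConj_real _
  obtain ⟨c1, hc1⟩ : ∃ c, c = cpairC Θ (BcM Θ g * ω₀ + ω₀ * (BcM Θ g)ᵀ) (matConj ω₀)
      + cpairC Θ ω₀ (BcM Θ g * matConj ω₀ + matConj ω₀ * (BcM Θ g)ᵀ) := ⟨_, rfl⟩
  obtain ⟨c2, hc2⟩ : ∃ c, c = cpairC Θ (BcM Θ g * ω₀ * (BcM Θ g)ᵀ) (matConj ω₀)
      + cpairC Θ (BcM Θ g * ω₀ + ω₀ * (BcM Θ g)ᵀ)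
          (BcM Θ g * matConj ω₀ + matConj ω₀ * (BcM Θ g)ᵀ)
      + cpairC Θ ω₀ (BcM Θ g * matConj ω₀ * (BcM Θ g)ᵀ) := ⟨_, rfl⟩
  obtain ⟨c3, hc3⟩ : ∃ c, c = cpairC Θ (BcM Θ g * ω₀ * (BcM Θ g)ᵀ)
          (BcM Θ g * matConj ω₀ + matConj ω₀ * (BcM Θ g)ᵀ)
      + cpairC Θ (BcM Θ g * ω₀ + ω₀ * (BcM Θ g)ᵀ)
          (BcM Θ g * matConj ω₀ * (BcM Θ g)ᵀ) := ⟨_, rfl⟩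
  obtain ⟨c4, hc4⟩ : ∃ c, c = cpairC Θ (BcM Θ g * ω₀ * (BcM Θ g)ᵀ)
      (BcM Θ g * matConj ω₀ * (BcM Θ g)ᵀ) := ⟨_, rfl⟩
  have hmat : ∀ t : ℝ, (1 + (t:ℂ) • BcM Θ g) * ω₀ * (1 + (t:ℂ) • BcM Θ g)ᵀ
      = ω₀ + (t:ℂ) • (BcM Θ g * ω₀ + ω₀ * (BcM Θ g)ᵀ)
        + (t:ℂ)^2 • (BcM Θ g * ω₀ * (BcM Θ g)ᵀ) := by
    intro t
    simp only [Matrix.transpose_add, Matrix.transpose_smul, Matrix.transpose_one,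
      add_mul, mul_add, one_mul, mul_one, Matrix.smul_mul, Matrix.mul_smul, smul_smul,
      smul_add, Matrix.mul_assoc]
    module
  have hconjmat : ∀ t : ℝ,
      matConj (ω₀ + (t:ℂ) • (BcM Θ g * ω₀ + ω₀ * (BcM Θ g)ᵀ)
        + (t:ℂ)^2 • (BcM Θ g * ω₀ * (BcM Θ g)ᵀ))
      = matConj ω₀ + (t:ℂ) • (BcM Θ g * matConj ω₀ + matConj ω₀ * (BcM Θ g)ᵀ)
        + (t:ℂ)^2 • (BcM Θ g * matConj ω₀ * (BcM Θ g)ᵀ) := by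
    intro t
    simp only [matConj_add, matConj_smul, matConj_mul, matConj_transpose, hBcreal,
      map_pow, Complex.conj_ofReal]
  have key : ∀ t : ℝ,
      0 ≤ (t:ℂ) * c1 + (t:ℂ)^2 * c2 + (t:ℂ)^3 * c3 + (t:ℂ)^4 * c4 := by
    intro t
    have h0 := hCk _ (rankLE_conj (1 + (t:ℂ) • BcM Θ g) hω₀)
    rw [hmat t, hconjmat t, expandPoly Θ t _ _ _ _ _ _ hnull] at h0
    rw [hc1, hc2, hc3, hc4]
    convert h0 using 2 <;> ring
  have hre : ∀ t : ℝ, 0 ≤ t * c1.re + t^2 * c2.re + t^3 * c3.re + t^4 * c4.re := by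
    intro t
    have := (Complex.le_def.mp (key t)).1
    simpa [← Complex.ofReal_pow, Complex.add_re, Complex.re_ofReal_mul] using this
  have him : ∀ t : ℝ, t * c1.im + t^2 * c2.im + t^3 * c3.im + t^4 * c4.im = 0 := by
    intro t
    have := (Complex.le_def.mp (key t)).2
    simpa [← Complex.ofReal_pow, Complex.add_im, Complex.im_ofReal_mul] using this.symm
  have hre0 : c1.re = 0 := coeff1_eq_zero hre
  have him0 : c1.im = 0 := coeff1_eq_zero fun t => le_of_eq (him t).symm
  have hc1zero : c1 = 0 := Complex.ext hre0 him0
  rw [identityA Θ g ω₀ (matConj ω₀), ← hc1, hc1zero, neg_zero]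


end
end
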